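/- arXiv:1905.04671 — 4 statements merged into one kernel-verified Lean document; each statement's English description precedes it below -/
import Mathlib

section
/- Let c ∈ ℝ and let u : [σ,τ] → ℝ be a continuously differentiable non-negative function with locally absolutely continuous derivative such that the map x ↦ e^{cx}u'(x) is non-increasing on [σ,τ] (as holds for non-negative solutions of u'' + cu' + λa⁺(x)g(u) + α = 0 with λ > 0, α ≥ 0, a⁺ ≥ 0, g ≥ 0). Then for every ε with 0 < ε < (τ−σ)/2 one has |u'(x)| ≤ (u(x)/ε)·e^{|c|(τ−σ)} for all x ∈ [σ+ε, τ−ε]. -/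
open MeasureTheory Set Filter Topology

noncomputable section

/-- Carathéodory solution of `u'' + c u' + h(x, u(x)) = 0` on `J`:
`u` is C¹ on `J` with derivative `u'`, which is (locally) absolutely continuous with
a.e.-derivative `u''`, and the equation holds a.e. on `J`. -/
def CaraSol (c : ℝ) (h : ℝ → ℝ → ℝ) (u u' : ℝ → ℝ) (J : Set ℝ) : Prop :=
  (∀ x ∈ J, HasDerivWithinAt u (u' x) J x) ∧
  ContinuousOn u' J ∧
  ∃ u'' : ℝ → ℝ,
    (∀ x ∈ J, ∀ y ∈ J, u' y - u' x = ∫ t in x..y, u'' t) ∧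
    (∀ᵐ x ∂(volume.restrict J), u'' x + c * u' x + h x (u x) = 0)

/-- positive part `a⁺` of a weight -/
def pospart (a : ℝ → ℝ) : ℝ → ℝ := fun x => max (a x) 0

/-- negative part `a⁻` of a weight -/
def negpart (a : ℝ → ℝ) : ℝ → ℝ := fun x => max (-a x) 0

/-- the two-parameter weight `a_{λ,μ} = λ a⁺ - μ a⁻` -/
def awt (a : ℝ → ℝ) (lam mu : ℝ) : ℝ → ℝ := fun x => lam * pospart a x - mu * negpart a x

/-- the critical ratio `μ#(λ) = λ ∫₀^P a⁺ / ∫₀^P a⁻` -/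
def muSharp (a : ℝ → ℝ) (P lam : ℝ) : ℝ :=
  lam * (∫ x in (0:ℝ)..P, pospart a x) / (∫ x in (0:ℝ)..P, negpart a x)

/-- A `P`-periodic locally integrable weight satisfying `(a*)`, with `m` positivity
intervals `I⁺ᵢ = [σ i, τ i]` separated by negativity intervals `I⁻ᵢ = [τ i, σ (i+1)]`. -/
structure AStar (P : ℝ) (m : ℕ) (a : ℝ → ℝ) (σ τ : ℕ → ℝ) : Prop where
  hP : 0 < P
  hm : 1 ≤ m
  periodic : ∀ x, a (x + P) = a x
  locint : LocallyIntegrable a volume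
  σ_one : σ 1 = 0
  σ_last : σ (m + 1) = P
  lt_στ : ∀ i ∈ Finset.Icc 1 m, σ i < τ i
  lt_τσ : ∀ i ∈ Finset.Icc 1 m, τ i < σ (i + 1)
  pos_ae : ∀ i ∈ Finset.Icc 1 m, ∀ᵐ x ∂(volume.restrict (Icc (σ i) (τ i))), 0 ≤ a x
  pos_ne : ∀ i ∈ Finset.Icc 1 m, ¬ (∀ᵐ x ∂(volume.restrict (Icc (σ i) (τ i))), a x = 0)
  neg_ae : ∀ i ∈ Finset.Icc 1 m, ∀ᵐ x ∂(volume.restrict (Icc (τ i) (σ (i + 1)))), a x ≤ 0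
  neg_ne : ∀ i ∈ Finset.Icc 1 m, ¬ (∀ᵐ x ∂(volume.restrict (Icc (τ i) (σ (i + 1)))), a x = 0)

/-- condition `(g*)` -/
def Gstar (g : ℝ → ℝ) : Prop := g 0 = 0 ∧ g 1 = 0 ∧ ∀ u ∈ Ioo (0:ℝ) 1, 0 < g u

/-- condition `(g₀)`: `g(u)/u → 0` as `u → 0⁺` -/
def Gzero (g : ℝ → ℝ) : Prop := Tendsto (fun u => g u / u) (𝓝[>] (0:ℝ)) (𝓝 0)

/-- condition `(g₁)`: `limsup_{u→1⁻} g(u)/(1-u) < ∞` -/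
def Gone (g : ℝ → ℝ) : Prop := ∃ K : ℝ, ∀ᶠ u in 𝓝[<] (1:ℝ), g u / (1 - u) ≤ K

/-- `P`-periodic Carathéodory solution of `u'' + c u' + w(x) g(u) = 0` on `ℝ`. -/
def PerSol (c : ℝ) (w g u u' : ℝ → ℝ) (P : ℝ) : Prop :=
  CaraSol c (fun x v => w x * g v) u u' univ ∧ ∀ x, u (x + P) = u x
/-- The gradient estimate (3.2): if `x ↦ e^{cx} u'(x)` is non-increasing on `[σ,τ]`
and `u ≥ 0`, then `|u'(x)| ≤ (u(x)/ε) e^{|c|(τ-σ)}` on `[σ+ε, τ-ε]`. -/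
theorem statement6 (c σ τ : ℝ) (hστ : σ < τ) (u u' : ℝ → ℝ)
    (hder : ∀ x ∈ Icc σ τ, HasDerivWithinAt u (u' x) (Icc σ τ) x)
    (hcont : ContinuousOn u' (Icc σ τ))
    (hnn : ∀ x ∈ Icc σ τ, 0 ≤ u x)
    (hmono : AntitoneOn (fun x => Real.exp (c * x) * u' x) (Icc σ τ))
    (ε : ℝ) (hε : 0 < ε) (hε2 : ε < (τ - σ) / 2) :
    ∀ x ∈ Icc (σ + ε) (τ - ε), |u' x| ≤ u x / ε * Real.exp (|c| * (τ - σ)) := by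
  intro x hx
  obtain ⟨hx1, hx2⟩ := hx
  have hσx : σ ≤ x - ε := by linarith
  have hxτ : x + ε ≤ τ := by linarith
  have hxI : x ∈ Icc σ τ := ⟨by linarith, by linarith⟩
  have hucont : ContinuousOn u (Icc σ τ) := fun s hs => (hder s hs).continuousWithinAt
  set M := |c| * (τ - σ) with hM
  have hMexp : Real.exp (-M) * Real.exp M = 1 := by rw [← Real.exp_add]; simp
  have hEpos := Real.exp_pos M
  have hE : ∀ s ∈ Icc σ τ, Real.exp (-M) ≤ Real.exp (c * (x - s)) := by
    intro s hs
    apply Real.exp_le_exp.2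
    have h1 : |c * (x - s)| ≤ M := by
      rw [abs_mul]
      apply mul_le_mul_of_nonneg_left _ (abs_nonneg c)
      rw [abs_le]
      obtain ⟨hs1, hs2⟩ := hs
      constructor <;> linarith
    linarith [neg_abs_le (c * (x - s))]
  rcases le_or_gt 0 (u' x) with hsgn | hsgn
  · -- MVT on [x - ε, x]
    have hlt : x - ε < x := by linarith
    have hsub : Icc (x - ε) x ⊆ Icc σ τ := Icc_subset_Icc hσx hxI.2
    obtain ⟨ξ, hξmem, hξd⟩ := exists_hasDerivAt_eq_slope u u' hlt (hucont.mono hsub)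
      (fun s hs => (hder s (hsub (Ioo_subset_Icc_self hs))).hasDerivAt
        (Icc_mem_nhds (by linarith [hs.1]) (by linarith [hs.2])))
    have hξI : ξ ∈ Icc σ τ := hsub (Ioo_subset_Icc_self hξmem)
    have hmono' := hmono hξI hxI (le_of_lt hξmem.2)
    simp only at hmono'
    have h1 : Real.exp (c * (x - ξ)) * u' x ≤ u' ξ := by
      calc Real.exp (c * (x - ξ)) * u' x
          = (Real.exp (c * x) * u' x) / Real.exp (c * ξ) := by
            rw [mul_sub, Real.exp_sub]; ring
        _ ≤ (Real.exp (c * ξ) * u' ξ) / Real.exp (c * ξ) := by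
            gcongr
        _ = u' ξ := by field_simp
    have h2 : Real.exp (-M) * u' x ≤ u' ξ := by
      refine le_trans ?_ h1
      exact mul_le_mul_of_nonneg_right (hE ξ hξI) hsgn
    have h3 : u' ξ ≤ u x / ε := by
      rw [hξd]
      have hden : x - (x - ε) = ε := by ring
      rw [hden]
      have hnn' : 0 ≤ u (x - ε) := hnn _ (hsub ⟨le_refl _, hlt.le⟩)
      apply div_le_div_of_nonneg_right ?_ hε.le
      · linarith
    rw [abs_of_nonneg hsgn]
    nlinarith [mul_le_mul_of_nonneg_right (h2.trans h3) hEpos.le, Real.exp_pos (-M)]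
  · -- MVT on [x, x + ε]
    have hlt : x < x + ε := by linarith
    have hsub : Icc x (x + ε) ⊆ Icc σ τ := Icc_subset_Icc hxI.1 hxτ
    obtain ⟨ξ, hξmem, hξd⟩ := exists_hasDerivAt_eq_slope u u' hlt (hucont.mono hsub)
      (fun s hs => (hder s (hsub (Ioo_subset_Icc_self hs))).hasDerivAt
        (Icc_mem_nhds (by linarith [hs.1]) (by linarith [hs.2])))
    have hξI : ξ ∈ Icc σ τ := hsub (Ioo_subset_Icc_self hξmem)
    have hmono' := hmono hxI hξI (le_of_lt hξmem.1)
    simp only at hmono'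
    have h1 : u' ξ ≤ Real.exp (c * (x - ξ)) * u' x := by
      calc u' ξ = (Real.exp (c * ξ) * u' ξ) / Real.exp (c * ξ) := by field_simp
        _ ≤ (Real.exp (c * x) * u' x) / Real.exp (c * ξ) := by
            gcongr
        _ = Real.exp (c * (x - ξ)) * u' x := by
            rw [mul_sub, Real.exp_sub]; ring
    have h2 : u' ξ ≤ Real.exp (-M) * u' x := by
      refine h1.trans ?_
      have := hE ξ hξI
      nlinarith
    have h3 : -(u x) / ε ≤ u' ξ := by
      rw [hξd]
      have hden : x + ε - x = ε := by ring
      rw [hden]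
      apply div_le_div_of_nonneg_right ?_ hε.le
      have hnn' : 0 ≤ u (x + ε) := hnn _ (hsub ⟨hlt.le, le_refl _⟩)
      linarith
    rw [abs_of_neg hsgn]
    have h4 : -(u x) / ε ≤ Real.exp (-M) * u' x := h3.trans h2
    have h5 : Real.exp (-M) * u' x * Real.exp M = u' x := by
      have h6 : Real.exp (-M) * u' x * Real.exp M = Real.exp (-M) * Real.exp M * u' x := by ring
      rw [h6, hMexp, one_mul]
    have h7 := mul_le_mul_of_nonneg_right h4 hEpos.le
    rw [h5] at h7
    have h8 : -u x / ε * Real.exp M = -(u x / ε * Real.exp M) := by ring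
    rw [h8] at h7
    linarith
end
end

section
/- Let c ∈ ℝ and let u : [σ,τ] → ℝ be a continuously differentiable non-negative function with locally absolutely continuous derivative such that the map x ↦ e^{cx}u'(x) is non-increasing on [σ,τ]. Suppose max_{x∈[σ,τ]} u(x) = ρ > 0 and let 0 < ε < (τ−σ)/2. Then, setting δ := ε/(ε + e^{2|c|(τ−σ)}(τ−σ)), one has min_{x∈[σ+ε, τ−ε]} u(x) ≥ δρ. -/
open MeasureTheory Set Filter Topology

noncomputable section

/-- The estimate (eq-delta): with `δ = ε/(ε + e^{2|c|(τ-σ)}(τ-σ))`,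
`min_{[σ+ε,τ-ε]} u ≥ δ ρ` where `ρ = max_{[σ,τ]} u`. -/
theorem statement7 (c σ τ ρ : ℝ) (hστ : σ < τ) (u u' : ℝ → ℝ)
    (hder : ∀ x ∈ Icc σ τ, HasDerivWithinAt u (u' x) (Icc σ τ) x)
    (hcont : ContinuousOn u' (Icc σ τ))
    (hnn : ∀ x ∈ Icc σ τ, 0 ≤ u x)
    (hmono : AntitoneOn (fun x => Real.exp (c * x) * u' x) (Icc σ τ))
    (hρ : 0 < ρ) (hmax : sSup (u '' Icc σ τ) = ρ)
    (ε : ℝ) (hε : 0 < ε) (hε2 : ε < (τ - σ) / 2) :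
    ∀ x ∈ Icc (σ + ε) (τ - ε),
      ε / (ε + Real.exp (2 * |c| * (τ - σ)) * (τ - σ)) * ρ ≤ u x := by
  intro x hx
  set K := |c| * (τ - σ) with hK
  have hτσ : 0 < τ - σ := by linarith
  have hKnn : 0 ≤ K := mul_nonneg (abs_nonneg c) hτσ.le
  have hu_cont : ContinuousOn u (Icc σ τ) := fun y hy => (hder y hy).continuousWithinAt
  have hxσ : σ + ε ≤ x := hx.1
  have hxτ : x ≤ τ - ε := hx.2
  have hxmem : x ∈ Icc σ τ := ⟨by linarith, by linarith⟩
  -- max point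
  obtain ⟨x₀, hx₀mem, hx₀max⟩ := isCompact_Icc.exists_isMaxOn (nonempty_Icc.2 hστ.le) hu_cont
  have hux₀ : u x₀ = ρ := by
    rw [← hmax]
    exact (IsGreatest.csSup_eq ⟨mem_image_of_mem u hx₀mem,
      by rintro y ⟨z, hz, rfl⟩; exact hx₀max hz⟩).symm
  -- integrability and FTC
  have hint : ∀ a ∈ Icc σ τ, ∀ b ∈ Icc σ τ, IntervalIntegrable u' volume a b :=
    fun a ha b hb => (hcont.mono (uIcc_subset_Icc ha hb)).intervalIntegrable
  have ftc : ∀ a ∈ Icc σ τ, ∀ b ∈ Icc σ τ, a ≤ b → ∫ t in a..b, u' t = u b - u a := by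
    intro a ha b hb hab
    refine intervalIntegral.integral_eq_sub_of_hasDeriv_right_of_le hab
      (hu_cont.mono (Icc_subset_Icc ha.1 hb.2)) (fun y hy => ?_) (hint a ha b hb)
    have h1 : σ < y := lt_of_le_of_lt ha.1 hy.1
    have h2 : y < τ := lt_of_lt_of_le hy.2 hb.2
    exact ((hder y ⟨h1.le, h2.le⟩).hasDerivAt (Icc_mem_nhds h1 h2)).hasDerivWithinAt
  -- exponential bounds
  have hexp_le : ∀ t ∈ Icc σ τ, Real.exp (c * (x - t)) ≤ Real.exp K := by
    intro t ht
    apply Real.exp_le_exp.2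
    calc c * (x - t) ≤ |c * (x - t)| := le_abs_self _
      _ = |c| * |x - t| := abs_mul _ _
      _ ≤ |c| * (τ - σ) := by
          apply mul_le_mul_of_nonneg_left _ (abs_nonneg c)
          rw [abs_le]
          exact ⟨by linarith [hxmem.1, hxmem.2, ht.1, ht.2],
            by linarith [hxmem.1, hxmem.2, ht.1, ht.2]⟩
  have hexp_ge : ∀ t ∈ Icc σ τ, Real.exp (-K) ≤ Real.exp (c * (x - t)) := by
    intro t ht
    apply Real.exp_le_exp.2
    have habs : |c * (x - t)| ≤ K := by
      rw [hK, abs_mul]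
      apply mul_le_mul_of_nonneg_left _ (abs_nonneg c)
      rw [abs_le]
      exact ⟨by linarith [hxmem.1, hxmem.2, ht.1, ht.2],
        by linarith [hxmem.1, hxmem.2, ht.1, ht.2]⟩
    linarith [neg_abs_le (c * (x - t))]
  -- pointwise comparison from the monotonicity of e^{cx} u'
  have hpt_left : ∀ t ∈ Icc σ τ, t ≤ x → Real.exp (c * (x - t)) * u' x ≤ u' t := by
    intro t ht htx
    have h : Real.exp (c * x) * u' x ≤ Real.exp (c * t) * u' t := hmono ht hxmem htx
    have he : (0:ℝ) < Real.exp (c * t) := Real.exp_pos _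
    rw [show c * (x - t) = c * x - c * t by ring, Real.exp_sub, div_mul_eq_mul_div,
      div_le_iff₀ he]
    linarith [mul_comm (u' t) (Real.exp (c * t))]
  have hpt_right : ∀ t ∈ Icc σ τ, x ≤ t → u' t ≤ Real.exp (c * (x - t)) * u' x := by
    intro t ht hxt
    have h : Real.exp (c * t) * u' t ≤ Real.exp (c * x) * u' x := hmono hxmem ht hxt
    have he : (0:ℝ) < Real.exp (c * t) := Real.exp_pos _
    rw [show c * (x - t) = c * x - c * t by ring, Real.exp_sub, div_mul_eq_mul_div,
      le_div_iff₀ he]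
    linarith [mul_comm (u' t) (Real.exp (c * t))]
  -- the final algebraic combination
  have final : ∀ C : ℝ, 0 ≤ C → ε * (Real.exp (-K) * C) ≤ u x →
      ρ - u x ≤ (τ - σ) * (Real.exp K * C) →
      ε / (ε + Real.exp (2 * |c| * (τ - σ)) * (τ - σ)) * ρ ≤ u x := by
    intro C hC h1 h2
    have hE : (0:ℝ) < Real.exp K := Real.exp_pos _
    have h2K : Real.exp (2 * |c| * (τ - σ)) = Real.exp K * Real.exp K := by
      rw [← Real.exp_add]; congr 1; rw [hK]; ring
    have hD : 0 < ε + Real.exp (2 * |c| * (τ - σ)) * (τ - σ) :=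
      add_pos hε (mul_pos (Real.exp_pos _) hτσ)
    have h1' : ε * C ≤ u x * Real.exp K := by
      have hmul := mul_le_mul_of_nonneg_right h1 hE.le
      have heq : ε * (Real.exp (-K) * C) * Real.exp K = ε * C := by
        rw [Real.exp_neg]
        field_simp
      linarith [hmul, heq]
    rw [div_mul_eq_mul_div, div_le_iff₀ hD, h2K]
    nlinarith [mul_le_mul_of_nonneg_left h2 hε.le,
      mul_le_mul_of_nonneg_left h1' (mul_nonneg hτσ.le hE.le), hnn x hxmem]
  rcases le_total x x₀ with hxx₀ | hxx₀
  · -- the max point lies to the right of x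
    set B := max (u' x) 0 with hB
    have hB0 : 0 ≤ B := le_max_right _ _
    have claim1 : ε * (Real.exp (-K) * B) ≤ u x := by
      rcases le_total (u' x) 0 with h | h
      · rw [hB, max_eq_right h]
        simpa using hnn x hxmem
      · have hmem' : x - ε ∈ Icc σ τ := ⟨by linarith, by linarith⟩
        have hmono_int : ∫ t in (x - ε)..x, (Real.exp (-K) * u' x) ≤ ∫ t in (x - ε)..x, u' t := by
          apply intervalIntegral.integral_mono_on (by linarith) intervalIntegrable_const
            (hint _ hmem' _ hxmem)
          intro t ht
          have ht' : t ∈ Icc σ τ := ⟨by linarith [ht.1], by linarith [ht.2]⟩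
          calc Real.exp (-K) * u' x ≤ Real.exp (c * (x - t)) * u' x :=
                mul_le_mul_of_nonneg_right (hexp_ge t ht') h
            _ ≤ u' t := hpt_left t ht' ht.2
        rw [intervalIntegral.integral_const, ftc _ hmem' _ hxmem (by linarith),
          show x - (x - ε) = ε by ring, smul_eq_mul] at hmono_int
        have hnn' := hnn _ hmem'
        rw [hB, max_eq_left h]
        linarith
    have claim2 : ρ - u x ≤ (τ - σ) * (Real.exp K * B) := by
      have h2 : ∫ t in x..x₀, u' t ≤ ∫ t in x..x₀, (Real.exp K * B) := by
        apply intervalIntegral.integral_mono_on hxx₀ (hint _ hxmem _ hx₀mem)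
          intervalIntegrable_const
        intro t ht
        have ht' : t ∈ Icc σ τ := ⟨by linarith [ht.1, hxmem.1], by linarith [ht.2, hx₀mem.2]⟩
        rcases le_total (u' x) 0 with h | h
        · calc u' t ≤ Real.exp (c * (x - t)) * u' x := hpt_right t ht' ht.1
            _ ≤ 0 := mul_nonpos_of_nonneg_of_nonpos (Real.exp_pos _).le h
            _ ≤ Real.exp K * B := mul_nonneg (Real.exp_pos _).le hB0
        · calc u' t ≤ Real.exp (c * (x - t)) * u' x := hpt_right t ht' ht.1
            _ ≤ Real.exp K * u' x := mul_le_mul_of_nonneg_right (hexp_le t ht') h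
            _ = Real.exp K * B := by rw [hB, max_eq_left h]
      rw [ftc _ hxmem _ hx₀mem hxx₀, intervalIntegral.integral_const, smul_eq_mul, hux₀] at h2
      have hmul : (x₀ - x) * (Real.exp K * B) ≤ (τ - σ) * (Real.exp K * B) :=
        mul_le_mul_of_nonneg_right (by linarith [hx₀mem.2, hxmem.1])
          (mul_nonneg (Real.exp_pos _).le hB0)
      linarith
    exact final B hB0 claim1 claim2
  · -- the max point lies to the left of x
    set A := max (-u' x) 0 with hA
    have hA0 : 0 ≤ A := le_max_right _ _
    have claim1 : ε * (Real.exp (-K) * A) ≤ u x := by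
      rcases le_total 0 (u' x) with h | h
      · rw [hA, max_eq_right (by linarith : -u' x ≤ 0)]
        simpa using hnn x hxmem
      · have hmem' : x + ε ∈ Icc σ τ := ⟨by linarith, by linarith⟩
        have hmono_int : ∫ t in x..(x + ε), u' t ≤ ∫ t in x..(x + ε), (Real.exp (-K) * u' x) := by
          apply intervalIntegral.integral_mono_on (by linarith) (hint _ hxmem _ hmem')
            intervalIntegrable_const
          intro t ht
          have ht' : t ∈ Icc σ τ := ⟨by linarith [ht.1], by linarith [ht.2]⟩
          calc u' t ≤ Real.exp (c * (x - t)) * u' x := hpt_right t ht' ht.1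
            _ ≤ Real.exp (-K) * u' x := mul_le_mul_of_nonpos_right (hexp_ge t ht') h
        rw [intervalIntegral.integral_const, ftc _ hxmem _ hmem' (by linarith),
          show x + ε - x = ε by ring, smul_eq_mul] at hmono_int
        have hnn' := hnn _ hmem'
        rw [hA, max_eq_left (by linarith : 0 ≤ -u' x)]
        nlinarith
    have claim2 : ρ - u x ≤ (τ - σ) * (Real.exp K * A) := by
      have h2 : ∫ t in x₀..x, (-(Real.exp K * A)) ≤ ∫ t in x₀..x, u' t := by
        apply intervalIntegral.integral_mono_on hxx₀ intervalIntegrable_const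
          (hint _ hx₀mem _ hxmem)
        intro t ht
        have ht' : t ∈ Icc σ τ := ⟨by linarith [ht.1, hx₀mem.1], by linarith [ht.2, hxmem.2]⟩
        rcases le_total 0 (u' x) with h | h
        · have : A = 0 := by rw [hA]; exact max_eq_right (by linarith)
          rw [this]
          calc -(Real.exp K * 0) = 0 := by ring
            _ ≤ Real.exp (c * (x - t)) * u' x := mul_nonneg (Real.exp_pos _).le h
            _ ≤ u' t := hpt_left t ht' ht.2
        · have hAe : A = -u' x := by rw [hA]; exact max_eq_left (by linarith)
          have : Real.exp K * u' x ≤ Real.exp (c * (x - t)) * u' x :=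
            mul_le_mul_of_nonpos_right (hexp_le t ht') h
          have h2' := hpt_left t ht' ht.2
          rw [hAe]
          nlinarith
      rw [ftc _ hx₀mem _ hxmem hxx₀, intervalIntegral.integral_const, smul_eq_mul, hux₀] at h2
      have hmul : (x - x₀) * (Real.exp K * A) ≤ (τ - σ) * (Real.exp K * A) :=
        mul_le_mul_of_nonneg_right (by linarith [hx₀mem.1, hxmem.2])
          (mul_nonneg (Real.exp_pos _).le hA0)
      linarith
    exact final A hA0 claim1 claim2
end
end

section
/- Let c ∈ ℝ, let a be a P-periodic locally integrable weight satisfying (a*), and let g : [0,1] → ℝ be continuously differentiable satisfying (g*) and g'(0) = 0. Let λ > 0 and μ > μ#(λ). Then there exists r₀ ∈ (0,1) such that for every θ ∈ (0,1], every non-negative P-periodic solution u of u'' + cu' + θ(λa⁺(x) − μa⁻(x))g(u) = 0 with ‖u‖_∞ ≤ r₀ satisfies u ≡ 0. -/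
open MeasureTheory Set Filter Topology

noncomputable section

/-!
Integrating the equation over a period gives `λ ∫ a⁺ g(u) = μ ∫ a⁻ g(u)`. Since `g'(0) = 0`, `g`
is `ε`-Lipschitz on `[0, δ]` for small `δ`. Starting from a maximum point `x₀` of `u`, where
`u'(x₀) = 0`, Grönwall's inequality bounds the oscillation of `u` by a multiple of `max g(u)`;
with the Lipschitz bound this keeps `g(u)` within `O(ε) g(u(x₀))` of `g(u(x₀))`. Substituted into
the balance, this gives `(μ ∫ a⁻ - λ ∫ a⁺) g(u(x₀)) ≤ O(ε) g(u(x₀))`, which is impossible for small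
`ε` because `μ > μ#(λ)`, unless `u(x₀) = 0`.
-/

lemma exists_lipschitz_Icc_zero_of_derivWithin_eq_zero {g : ℝ → ℝ}
    (hg : ContDiffOn ℝ 1 g (Icc 0 1)) (hg'0 : derivWithin g (Icc 0 1) 0 = 0)
    {ε : ℝ} (hε : 0 < ε) :
    ∃ δ ∈ Ioo (0:ℝ) 1, ∀ x ∈ Icc (0:ℝ) δ, ∀ y ∈ Icc (0:ℝ) δ, |g x - g y| ≤ ε * |x - y| := by
  have hcont : ContinuousWithinAt (derivWithin g (Icc 0 1)) (Icc 0 1) 0 :=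
    hg.continuousOn_derivWithin (uniqueDiffOn_Icc one_pos) le_rfl 0 (by simp)
  obtain ⟨δ₀, hδ₀, hball⟩ := Metric.continuousWithinAt_iff.mp hcont ε hε
  set δ := min (δ₀ / 2) (1 / 2)
  have hδ : 0 < δ := by positivity
  have hδδ₀ : δ < δ₀ := by linarith [min_le_left (δ₀ / 2) (1 / 2)]
  have hδ1 : δ < 1 := by linarith [min_le_right (δ₀ / 2) (1 / 2)]
  have hsub : Icc (0:ℝ) δ ⊆ Icc 0 1 := Icc_subset_Icc le_rfl hδ1.le
  have hdiff : DifferentiableOn ℝ g (Icc 0 1) := hg.differentiableOn one_ne_zero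
  have hbound : ∀ z ∈ Icc (0:ℝ) δ, ‖derivWithin g (Icc 0 δ) z‖ ≤ ε := by
    intro z hz
    rw [derivWithin_subset hsub (uniqueDiffOn_Icc hδ z hz) (hdiff z (hsub hz))]
    have hz₀ : dist z 0 < δ₀ := by
      rw [Real.dist_eq, sub_zero, abs_of_nonneg hz.1]; linarith [hz.2]
    simpa [hg'0] using (hball (hsub hz) hz₀).le
  refine ⟨δ, ⟨hδ, hδ1⟩, fun x hx y hy => ?_⟩
  simpa [Real.norm_eq_abs] using
    (convex_Icc 0 δ).norm_image_sub_le_of_norm_derivWithin_le (hdiff.mono hsub) hbound hy hx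

lemma intervalIntegral_pos_of_not_ae_eq_zero {f : ℝ → ℝ} {a b s t : ℝ} (has : a ≤ s)
    (hst : s ≤ t) (htb : t ≤ b) (hf : LocallyIntegrable f) (hnn : 0 ≤ f)
    (hne : ¬ ∀ᵐ x ∂(volume.restrict (Icc s t)), f x = 0) :
    0 < ∫ x in a..b, f x := by
  have hpos : 0 < ∫ x in s..t, f x := by
    rw [intervalIntegral.integral_of_le hst, ← integral_Icc_eq_integral_Ioc]
    refine (setIntegral_nonneg measurableSet_Icc fun x _ => hnn x).lt_of_ne fun h => hne ?_
    exact (integral_eq_zero_iff_of_nonneg hnn (hf.integrableOn_isCompact isCompact_Icc)).mp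
      h.symm
  exact hpos.trans_le <| intervalIntegral.integral_mono_interval has hst htb
    (ae_of_all _ hnn) (hf.integrableOn_isCompact isCompact_uIcc).intervalIntegrable

lemma Function.Periodic.exists_forall_ge_of_continuous {u : ℝ → ℝ} {P : ℝ}
    (hu : Function.Periodic u P) (hP : 0 < P) (hc : Continuous u) : ∃ x₀, ∀ y, u y ≤ u x₀ := by
  obtain ⟨_, ⟨x₀, rfl⟩, hmax⟩ :=
    (hu.compact_of_continuous hP.ne' hc).exists_isGreatest (range_nonempty u)
  exact ⟨x₀, fun y => hmax (mem_range_self y)⟩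

lemma Function.Periodic.le_sSup_image_Icc {u : ℝ → ℝ} {P : ℝ} (hu : Function.Periodic u P)
    (hP : 0 < P) (hc : Continuous u) (x : ℝ) : u x ≤ sSup (u '' Icc 0 P) := by
  obtain ⟨s, hs, hus⟩ := hu.exists_mem_Ico₀ hP x
  rw [hus]
  exact le_csSup (isCompact_Icc.image hc).bddAbove (mem_image_of_mem u (Ico_subset_Icc_self hs))

lemma intervalIntegrable_mul_of_continuous {w G : ℝ → ℝ} (hw : LocallyIntegrable w)
    (hG : Continuous G) (x y : ℝ) : IntervalIntegrable (fun t => w t * G t) volume x y :=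
  ((hw.integrableOn_isCompact isCompact_uIcc).mul_continuousOn hG.continuousOn
    isCompact_uIcc).intervalIntegrable

lemma abs_integral_mul_le_of_periodic {w G : ℝ → ℝ} {P T x₀ t : ℝ}
    (hw : Function.Periodic w P) (hwint : LocallyIntegrable w) (hG : Continuous G)
    (hT : ∀ s, |G s| ≤ T) (ht : t ∈ Icc x₀ (x₀ + P)) :
    |∫ s in x₀..t, w s * G s| ≤ T * ∫ s in (0:ℝ)..P, |w s| := by
  have hT0 : 0 ≤ T := (abs_nonneg _).trans (hT 0)
  have hwT : ∀ x y, IntervalIntegrable (fun s => |w s| * T) volume x y := fun x y =>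
    (hwint.integrableOn_isCompact isCompact_uIcc).intervalIntegrable.abs.mul_const T
  calc |∫ s in x₀..t, w s * G s| ≤ ∫ s in x₀..t, |w s * G s| :=
        intervalIntegral.abs_integral_le_integral_abs ht.1
    _ ≤ ∫ s in x₀..t, |w s| * T :=
        intervalIntegral.integral_mono_on ht.1
          (intervalIntegrable_mul_of_continuous hwint hG x₀ t).abs (hwT x₀ t)
          fun s _ => by rw [abs_mul]; exact mul_le_mul_of_nonneg_left (hT s) (abs_nonneg _)
    _ ≤ ∫ s in x₀..(x₀ + P), |w s| * T :=
        intervalIntegral.integral_mono_interval le_rfl ht.1 ht.2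
          (ae_of_all _ fun s => mul_nonneg (abs_nonneg _) hT0) (hwT x₀ (x₀ + P))
    _ = T * ∫ s in (0:ℝ)..P, |w s| := by
        have hw' : Function.Periodic (fun s => |w s|) P := fun s => by simp only [hw s]
        rw [intervalIntegral.integral_mul_const, hw'.intervalIntegral_add_eq x₀ 0, zero_add,
          mul_comm]

lemma sub_mul_le_of_integral_mul_eq {p n G : ℝ → ℝ} {P lam mu γ η : ℝ} (hP : 0 ≤ P)
    (hlam : 0 ≤ lam) (hmu : 0 ≤ mu) (hp : 0 ≤ p) (hn : 0 ≤ n) (hpi : LocallyIntegrable p)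
    (hni : LocallyIntegrable n) (hGc : Continuous G) (hG : ∀ t ∈ Icc 0 P, |G t - γ| ≤ η)
    (hbal : lam * ∫ t in (0:ℝ)..P, p t * G t = mu * ∫ t in (0:ℝ)..P, n t * G t) :
    (mu * (∫ t in (0:ℝ)..P, n t) - lam * ∫ t in (0:ℝ)..P, p t) * γ
      ≤ (lam * (∫ t in (0:ℝ)..P, p t) + mu * ∫ t in (0:ℝ)..P, n t) * η := by
  have hup : ∫ t in (0:ℝ)..P, p t * G t ≤ (∫ t in (0:ℝ)..P, p t) * (γ + η) := by
    rw [← intervalIntegral.integral_mul_const]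
    refine intervalIntegral.integral_mono_on hP (intervalIntegrable_mul_of_continuous hpi hGc 0 P)
      (intervalIntegrable_mul_of_continuous hpi continuous_const 0 P) fun t ht => ?_
    exact mul_le_mul_of_nonneg_left (by linarith [(abs_le.mp (hG t ht)).2]) (hp t)
  have hlow : (∫ t in (0:ℝ)..P, n t) * (γ - η) ≤ ∫ t in (0:ℝ)..P, n t * G t := by
    rw [← intervalIntegral.integral_mul_const]
    refine intervalIntegral.integral_mono_on hP
      (intervalIntegrable_mul_of_continuous hni continuous_const 0 P)
      (intervalIntegrable_mul_of_continuous hni hGc 0 P) fun t ht => ?_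
    exact mul_le_mul_of_nonneg_left (by linarith [(abs_le.mp (hG t ht)).1]) (hn t)
  nlinarith [mul_le_mul_of_nonneg_left hup hlam, mul_le_mul_of_nonneg_left hlow hmu]

lemma pospart_nonneg (a : ℝ → ℝ) : 0 ≤ pospart a := fun _ => le_max_right _ _

lemma negpart_nonneg (a : ℝ → ℝ) : 0 ≤ negpart a := fun _ => le_max_right _ _

lemma abs_awt {lam mu : ℝ} (hlam : 0 ≤ lam) (hmu : 0 ≤ mu) (a : ℝ → ℝ) (x : ℝ) :
    |awt a lam mu x| = lam * pospart a x + mu * negpart a x := by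
  simp only [awt, pospart, negpart]
  rcases le_total 0 (a x) with h | h
  · rw [max_eq_left h, max_eq_right (neg_nonpos.mpr h), mul_zero, sub_zero, add_zero,
      abs_of_nonneg (mul_nonneg hlam h)]
  · rw [max_eq_right h, max_eq_left (neg_nonneg.mpr h), mul_zero, zero_sub, zero_add,
      abs_neg, abs_of_nonneg (mul_nonneg hmu (neg_nonneg.mpr h))]

lemma MeasureTheory.LocallyIntegrable.pospart {a : ℝ → ℝ} (ha : LocallyIntegrable a) :
    LocallyIntegrable (pospart a) :=
  (locallyIntegrable_iff.mpr fun _ hk => (ha.integrableOn_isCompact hk).pos_part)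

lemma MeasureTheory.LocallyIntegrable.negpart {a : ℝ → ℝ} (ha : LocallyIntegrable a) :
    LocallyIntegrable (negpart a) :=
  ha.neg.pospart

lemma MeasureTheory.LocallyIntegrable.awt {a : ℝ → ℝ} (ha : LocallyIntegrable a) (lam mu : ℝ) :
    LocallyIntegrable (awt a lam mu) :=
  (ha.pospart.smul lam).sub (ha.negpart.smul mu)

lemma integral_abs_awt {a : ℝ → ℝ} (ha : LocallyIntegrable a) {lam mu : ℝ} (hlam : 0 ≤ lam)
    (hmu : 0 ≤ mu) (x y : ℝ) :
    ∫ t in x..y, |awt a lam mu t|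
      = lam * (∫ t in x..y, pospart a t) + mu * ∫ t in x..y, negpart a t := by
  simp_rw [abs_awt hlam hmu]
  rw [intervalIntegral.integral_add
      ((ha.pospart.integrableOn_isCompact isCompact_uIcc).intervalIntegrable.const_mul lam)
      ((ha.negpart.integrableOn_isCompact isCompact_uIcc).intervalIntegrable.const_mul mu),
    intervalIntegral.integral_const_mul, intervalIntegral.integral_const_mul]

lemma integral_awt_mul {a G : ℝ → ℝ} (ha : LocallyIntegrable a) (hG : Continuous G)
    (lam mu x y : ℝ) :
    ∫ t in x..y, awt a lam mu t * G t
      = lam * (∫ t in x..y, pospart a t * G t) - mu * ∫ t in x..y, negpart a t * G t := by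
  simp_rw [awt, sub_mul, mul_assoc]
  rw [intervalIntegral.integral_sub
      ((intervalIntegrable_mul_of_continuous ha.pospart hG x y).const_mul lam)
      ((intervalIntegrable_mul_of_continuous ha.negpart hG x y).const_mul mu),
    intervalIntegral.integral_const_mul, intervalIntegral.integral_const_mul]

namespace AStar

variable {P : ℝ} {m : ℕ} {a : ℝ → ℝ} {σ τ : ℕ → ℝ}

lemma σ_le_of_le (ha : AStar P m a σ τ) {i j : ℕ} (hi : 1 ≤ i) (hij : i ≤ j) (hj : j ≤ m + 1) :
    σ i ≤ σ j := by
  induction j, hij using Nat.le_induction with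
  | base => rfl
  | succ k hik ih =>
    have hk : k ∈ Finset.Icc 1 m := Finset.mem_Icc.mpr ⟨hi.trans hik, by omega⟩
    exact (ih (by omega)).trans ((ha.lt_στ k hk).trans (ha.lt_τσ k hk)).le

lemma integral_pospart_pos (ha : AStar P m a σ τ) : 0 < ∫ x in (0:ℝ)..P, pospart a x := by
  have h1 : 1 ∈ Finset.Icc 1 m := Finset.mem_Icc.mpr ⟨le_rfl, ha.hm⟩
  have hτP : τ 1 ≤ P := by
    rw [← ha.σ_last]
    exact (ha.lt_τσ 1 h1).le.trans (ha.σ_le_of_le one_le_two (by have := ha.hm; omega) le_rfl)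
  refine intervalIntegral_pos_of_not_ae_eq_zero ha.σ_one.ge (ha.lt_στ 1 h1).le hτP
    ha.locint.pospart (pospart_nonneg a) fun h => ha.pos_ne 1 h1 ?_
  filter_upwards [h, ha.pos_ae 1 h1] with x h0 hx
  rwa [pospart, max_eq_left hx] at h0

lemma integral_negpart_pos (ha : AStar P m a σ τ) : 0 < ∫ x in (0:ℝ)..P, negpart a x := by
  have hm : m ∈ Finset.Icc 1 m := Finset.mem_Icc.mpr ⟨ha.hm, le_rfl⟩
  have hτ : 0 ≤ τ m := by
    rw [← ha.σ_one]
    exact (ha.σ_le_of_le le_rfl ha.hm (by omega)).trans (ha.lt_στ m hm).le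
  refine intervalIntegral_pos_of_not_ae_eq_zero hτ (ha.lt_τσ m hm).le ha.σ_last.le
    ha.locint.negpart (negpart_nonneg a) fun h => ha.neg_ne m hm ?_
  filter_upwards [h, ha.neg_ae m hm] with x h0 hx
  rw [negpart, max_eq_left (neg_nonneg.mpr hx)] at h0
  linarith

lemma periodic_awt (ha : AStar P m a σ τ) (lam mu : ℝ) : Function.Periodic (awt a lam mu) P := by
  intro x
  simp only [awt, pospart, negpart, ha.periodic x]

end AStar

namespace CaraSol

variable {c : ℝ} {h : ℝ → ℝ → ℝ} {u u' : ℝ → ℝ}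

lemma hasDerivAt (hsol : CaraSol c h u u' univ) (x : ℝ) : HasDerivAt u (u' x) x :=
  hasDerivWithinAt_univ.mp (hsol.1 x (mem_univ x))

lemma continuous (hsol : CaraSol c h u u' univ) : Continuous u :=
  continuous_iff_continuousAt.mpr fun x => (hsol.hasDerivAt x).continuousAt

lemma continuous_deriv (hsol : CaraSol c h u u' univ) : Continuous u' :=
  continuousOn_univ.mp hsol.2.1

lemma deriv_sub_deriv (hsol : CaraSol c h u u' univ)
    (hint : ∀ x y, IntervalIntegrable (fun t => h t (u t)) volume x y) (x y : ℝ) :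
    u' y - u' x = -(c * (u y - u x)) - ∫ t in x..y, h t (u t) := by
  obtain ⟨u'', hu'', heq⟩ := hsol.2.2
  rw [Measure.restrict_univ] at heq
  have hu'int : IntervalIntegrable u' volume x y := hsol.continuous_deriv.intervalIntegrable x y
  calc u' y - u' x = ∫ t in x..y, u'' t := hu'' x trivial y trivial
    _ = ∫ t in x..y, (-(c * u' t) - h t (u t)) :=
        intervalIntegral.integral_congr_ae (by filter_upwards [heq] with t ht _; linarith)
    _ = -(c * (u y - u x)) - ∫ t in x..y, h t (u t) := by
        rw [intervalIntegral.integral_sub (f := fun t => -(c * u' t)) (hu'int.const_mul c).neg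
            (hint x y),
          intervalIntegral.integral_neg, intervalIntegral.integral_const_mul,
          intervalIntegral.integral_eq_sub_of_hasDerivAt (fun t _ => hsol.hasDerivAt t) hu'int]

end CaraSol

namespace PerSol

variable {c P : ℝ} {w g u u' : ℝ → ℝ}

lemma periodic (hsol : PerSol c w g u u' P) : Function.Periodic u P := hsol.2

lemma periodic_deriv (hsol : PerSol c w g u u' P) : Function.Periodic u' P := fun x => by
  have h := (hsol.1.hasDerivAt (x + P)).comp_add_const x P
  rw [show (fun y => u (y + P)) = u from funext hsol.2] at h
  exact h.unique (hsol.1.hasDerivAt x)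

lemma integral_eq_zero (hsol : PerSol c w g u u' P) (hw : LocallyIntegrable w)
    (hG : Continuous fun t => g (u t)) : ∫ t in (0:ℝ)..P, w t * g (u t) = 0 := by
  have h := hsol.1.deriv_sub_deriv (intervalIntegrable_mul_of_continuous hw hG) 0 P
  have hu : u P = u 0 := by simpa using hsol.2 0
  have hu' : u' P = u' 0 := by simpa using hsol.periodic_deriv 0
  rw [hu, hu'] at h
  linarith

lemma abs_sub_le_of_deriv_eq_zero (hP : 0 < P) (hsol : PerSol c w g u u' P)
    (hw : Function.Periodic w P) (hwint : LocallyIntegrable w)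
    (hG : Continuous fun t => g (u t)) {T : ℝ} (hT : ∀ t, |g (u t)| ≤ T)
    {x₀ : ℝ} (hx₀ : u' x₀ = 0) (t : ℝ) :
    |u t - u x₀| ≤ T * (∫ x in (0:ℝ)..P, |w x|) * Real.exp ((|c| + 1) * P) := by
  set K := |c| + 1
  set B := T * ∫ x in (0:ℝ)..P, |w x|
  have hK : 1 ≤ K := le_add_of_nonneg_left (abs_nonneg c)
  have hB : 0 ≤ B := mul_nonneg ((abs_nonneg _).trans (hT 0))
    (intervalIntegral.integral_nonneg hP.le fun _ _ => abs_nonneg _)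
  have hgron : ∀ s ∈ Icc x₀ (x₀ + P), ‖u s - u x₀‖ ≤ gronwallBound 0 K B (s - x₀) := by
    refine norm_le_gronwallBound_of_norm_deriv_right_le (f' := u')
      (hsol.1.continuous.sub continuous_const).continuousOn
      (fun s _ => ((hsol.1.hasDerivAt s).sub_const _).hasDerivWithinAt) (by simp)
      fun s hs => ?_
    have hJ := abs_integral_mul_le_of_periodic hw hwint hG hT (Ico_subset_Icc_self hs)
    rw [← sub_zero (u' s), ← hx₀,
      hsol.1.deriv_sub_deriv (intervalIntegrable_mul_of_continuous hwint hG) x₀ s,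
      Real.norm_eq_abs, Real.norm_eq_abs]
    calc |-(c * (u s - u x₀)) - ∫ t in x₀..s, w t * g (u t)|
        ≤ |c| * |u s - u x₀| + B := by
          rw [← abs_mul]; exact (abs_sub _ _).trans (by rw [abs_neg]; linarith)
      _ ≤ K * |u s - u x₀| + B := by gcongr; linarith
  obtain ⟨s, hs, hus⟩ := hsol.periodic.exists_mem_Ico hP t x₀
  have hgron_P : gronwallBound 0 K B P = B / K * (Real.exp (K * P) - 1) := by
    simp [gronwallBound_of_K_ne_0 (by positivity : K ≠ 0)]
  rw [hus, ← Real.norm_eq_abs]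
  calc ‖u s - u x₀‖ ≤ gronwallBound 0 K B (s - x₀) := hgron s (Ico_subset_Icc_self hs)
    _ ≤ gronwallBound 0 K B P := gronwallBound_mono le_rfl hB (by positivity) (by linarith [hs.2])
    _ ≤ B * Real.exp (K * P) := by
        rw [hgron_P]
        exact mul_le_mul (div_le_self hB hK) (by linarith)
          (by linarith [Real.one_le_exp (by positivity : 0 ≤ K * P)])
          hB

lemma abs_comp_sub_le (hP : 0 < P) (hsol : PerSol c w g u u' P)
    (hw : Function.Periodic w P) (hwint : LocallyIntegrable w)
    (hG : Continuous fun t => g (u t)) (hgnn : ∀ t, 0 ≤ g (u t)) {ε δ C : ℝ} (hε : 0 ≤ ε)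
    (hLip : ∀ x ∈ Icc (0:ℝ) δ, ∀ y ∈ Icc (0:ℝ) δ, |g x - g y| ≤ ε * |x - y|)
    (hu : ∀ t, u t ∈ Icc 0 δ)
    (hC : (∫ x in (0:ℝ)..P, |w x|) * Real.exp ((|c| + 1) * P) ≤ C) (hεC : ε * C ≤ 1 / 2)
    {x₀ : ℝ} (hx₀ : ∀ y, u y ≤ u x₀) (t : ℝ) :
    |g (u t) - g (u x₀)| ≤ 2 * ε * C * g (u x₀) := by
  obtain ⟨t₁, hT⟩ :=
    Function.Periodic.exists_forall_ge_of_continuous (hsol.periodic.comp g) hP hG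
  set T := g (u t₁)
  have hT0 : 0 ≤ T := hgnn t₁
  have hosc : ∀ s, |u s - u x₀| ≤ C * T := fun s => by
    have h := hsol.abs_sub_le_of_deriv_eq_zero hP hw hwint hG
      (fun s => (abs_of_nonneg (hgnn s)).trans_le (hT s))
      ((IsLocalMax.hasDerivAt_eq_zero (Eventually.of_forall hx₀) (hsol.1.hasDerivAt x₀))) s
    calc |u s - u x₀| ≤ T * ((∫ x in (0:ℝ)..P, |w x|) * Real.exp ((|c| + 1) * P)) := by
          rwa [← mul_assoc]
      _ ≤ C * T := by rw [mul_comm]; exact mul_le_mul_of_nonneg_right hC hT0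
  have hclose : ∀ s, |g (u s) - g (u x₀)| ≤ ε * C * T := fun s =>
    (hLip _ (hu s) _ (hu x₀)).trans <| by
      rw [mul_assoc]; exact mul_le_mul_of_nonneg_left (hosc s) hε
  -- `T - g (u x₀) ≤ ε C T ≤ T / 2`
  have hT2 : T ≤ 2 * g (u x₀) := by
    nlinarith [(abs_le.mp (hclose t₁)).2, mul_le_mul_of_nonneg_right hεC hT0]
  have hC0 : 0 ≤ C := (mul_nonneg (intervalIntegral.integral_nonneg hP.le fun _ _ =>
    abs_nonneg _) (Real.exp_pos _).le).trans hC
  have hεC0 : 0 ≤ ε * C := mul_nonneg hε hC0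
  calc |g (u t) - g (u x₀)| ≤ ε * C * T := hclose t
    _ ≤ 2 * ε * C * g (u x₀) := by nlinarith [mul_le_mul_of_nonneg_left hT2 hεC0]

end PerSol

namespace AStar

variable {c P : ℝ} {m : ℕ} {a : ℝ → ℝ} {σ τ : ℕ → ℝ} {g : ℝ → ℝ} {lam mu : ℝ}

lemma eq_zero_of_forall_le (ha : AStar P m a σ τ) (hgc : ContinuousOn g (Icc 0 1))
    (hg0 : g 0 = 0) (hgpos : ∀ v ∈ Ioo (0:ℝ) 1, 0 < g v) (hlam : 0 ≤ lam) (hmu : 0 ≤ mu)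
    {ε δ C : ℝ} (hε : 0 ≤ ε) (hδ : δ < 1)
    (hLip : ∀ x ∈ Icc (0:ℝ) δ, ∀ y ∈ Icc (0:ℝ) δ, |g x - g y| ≤ ε * |x - y|)
    (hC : (lam * (∫ x in (0:ℝ)..P, pospart a x) + mu * ∫ x in (0:ℝ)..P, negpart a x)
      * Real.exp ((|c| + 1) * P) ≤ C) (hεC : ε * C ≤ 1 / 2)
    (hεgap : 2 * ε * C * (lam * (∫ x in (0:ℝ)..P, pospart a x) + mu * ∫ x in (0:ℝ)..P, negpart a x)
      < mu * (∫ x in (0:ℝ)..P, negpart a x) - lam * ∫ x in (0:ℝ)..P, pospart a x)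
    {θ : ℝ} (hθ : θ ∈ Ioc (0:ℝ) 1) {u u' : ℝ → ℝ}
    (hsol : PerSol c (fun x => θ * awt a lam mu x) g u u' P) (hnn : ∀ x, 0 ≤ u x)
    (hle : ∀ x, u x ≤ δ) (x : ℝ) : u x = 0 := by
  obtain ⟨x₀, hx₀⟩ := hsol.periodic.exists_forall_ge_of_continuous ha.hP hsol.1.continuous
  rcases (hnn x₀).eq_or_lt with hM | hM
  · exact le_antisymm (hM ▸ hx₀ x) (hnn x)
  exfalso
  have hu : ∀ t, u t ∈ Icc 0 δ := fun t => ⟨hnn t, hle t⟩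
  have hG : Continuous fun t => g (u t) :=
    hgc.comp_continuous hsol.1.continuous fun t => ⟨hnn t, (hle t).trans hδ.le⟩
  have hgnn : ∀ t, 0 ≤ g (u t) := fun t => (hnn t).eq_or_lt.elim
    (fun h => by rw [← h, hg0]) (fun h => (hgpos _ ⟨h, (hle t).trans_lt hδ⟩).le)
  have hgM : 0 < g (u x₀) := hgpos _ ⟨hM, (hle x₀).trans_lt hδ⟩
  have hwint : LocallyIntegrable fun x => θ * awt a lam mu x := (ha.locint.awt lam mu).smul θ
  have hθC : (∫ x in (0:ℝ)..P, |θ * awt a lam mu x|) * Real.exp ((|c| + 1) * P) ≤ C := by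
    simp_rw [abs_mul, abs_of_pos hθ.1]
    rw [intervalIntegral.integral_const_mul, integral_abs_awt ha.locint hlam hmu, mul_assoc]
    refine (mul_le_of_le_one_left ?_ hθ.2).trans hC
    exact mul_nonneg (add_nonneg (mul_nonneg hlam ha.integral_pospart_pos.le)
      (mul_nonneg hmu ha.integral_negpart_pos.le)) (Real.exp_pos _).le
  have hclose := hsol.abs_comp_sub_le ha.hP (fun x => by simp only [ha.periodic_awt lam mu x])
    hwint hG hgnn hε hLip hu hθC hεC hx₀
  have hbal : lam * ∫ t in (0:ℝ)..P, pospart a t * g (u t)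
      = mu * ∫ t in (0:ℝ)..P, negpart a t * g (u t) := by
    have h := hsol.integral_eq_zero hwint hG
    simp_rw [mul_assoc] at h
    rw [intervalIntegral.integral_const_mul, integral_awt_mul ha.locint hG] at h
    linarith [(mul_eq_zero.mp h).resolve_left hθ.1.ne']
  have key := sub_mul_le_of_integral_mul_eq ha.hP.le hlam hmu (pospart_nonneg a)
    (negpart_nonneg a) ha.locint.pospart ha.locint.negpart hG (fun t _ => hclose t) hbal
  nlinarith [mul_lt_mul_of_pos_right hεgap hgM]

end AStar

/-- Lemma 2.4 (lem-r0): small non-negative periodic solutions of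
`u'' + cu' + θ a_{λ,μ}(x) g(u) = 0` are identically zero. -/
theorem statement8 (c P : ℝ) (m : ℕ) (a : ℝ → ℝ) (σ τ : ℕ → ℝ)
    (ha : AStar P m a σ τ)
    (g : ℝ → ℝ) (hg : ContDiffOn ℝ 1 g (Icc 0 1)) (hgs : Gstar g)
    (hg'0 : derivWithin g (Icc 0 1) 0 = 0)
    (lam mu : ℝ) (hlam : 0 < lam) (hmu : muSharp a P lam < mu) :
    ∃ r0 ∈ Ioo (0:ℝ) 1, ∀ θ ∈ Ioc (0:ℝ) 1, ∀ u u' : ℝ → ℝ,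
      PerSol c (fun x => θ * awt a lam mu x) g u u' P →
      (∀ x, 0 ≤ u x) → sSup (u '' Icc (0:ℝ) P) ≤ r0 → ∀ x, u x = 0 := by
  obtain ⟨hg0, -, hgpos⟩ := hgs
  set Ap := ∫ x in (0:ℝ)..P, pospart a x
  set An := ∫ x in (0:ℝ)..P, negpart a x
  have hAp : 0 < Ap := ha.integral_pospart_pos
  have hAn : 0 < An := ha.integral_negpart_pos
  have hgap : lam * Ap < mu * An := (div_lt_iff₀ hAn).mp hmu
  have hmu0 : 0 < mu := pos_of_mul_pos_left ((mul_pos hlam hAp).trans hgap) hAn.le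
  set Q := lam * Ap + mu * An
  have hQ : 0 < Q := add_pos (mul_pos hlam hAp) (mul_pos hmu0 hAn)
  set C := Q * Real.exp ((|c| + 1) * P)
  have hC : 0 < C := by positivity
  set η := min (1 / 2) ((mu * An - lam * Ap) / (4 * Q))
  have hη : 0 < η := lt_min one_half_pos (div_pos (by linarith) (by positivity))
  have hηgap : η * (4 * Q) ≤ mu * An - lam * Ap :=
    (le_div_iff₀ (by positivity)).mp (min_le_right _ _)
  set ε := η / C
  have hε : 0 < ε := div_pos hη hC
  have hεC : ε * C = η := div_mul_cancel₀ η hC.ne'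
  obtain ⟨δ, hδ, hLip⟩ := exists_lipschitz_Icc_zero_of_derivWithin_eq_zero hg hg'0 hε
  refine ⟨δ, hδ, fun θ hθ u u' hsol hnn hsup => ?_⟩
  refine ha.eq_zero_of_forall_le hg.continuousOn hg0 hgpos hlam.le hmu0.le hε.le hδ.2
    hLip le_rfl (hεC.trans_le (min_le_left _ _)) (by rw [mul_assoc 2, hεC]; linarith) hθ hsol hnn
    fun x => ?_
  exact (hsol.periodic.le_sSup_image_Icc ha.hP hsol.1.continuous x).trans hsup
end
end

section
/- Let c ∈ ℝ, let g : [0,1] → ℝ be continuous satisfying (g*) and (g₁), let J ⊂ ℝ be a compact interval, and let b ∈ L¹(J). Then for every ε ∈ (0,1) there exists R_ε = R_ε(c,g,J,b) ∈ (0,1) such that for every θ ∈ (0,1] and every solution u of u'' + cu' + θb(x)g(u) = 0 on J with 0 ≤ u(x) ≤ 1 for all x ∈ J, if u(x̂) ≥ R_ε and u'(x̂) = 0 for some x̂ ∈ J, then u(x) ≥ 1 − ε and |u'(x)| ≤ ε for all x ∈ J. -/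
open MeasureTheory Set Filter Topology

noncomputable section

/-! With `K` such that `|g v| ≤ K (1 - v)` on `[0, 1]` (from (g*), (g₁) and continuity), the
energy `E = (1 - u) + |u'|` of any solution satisfies `|E y - E x| ≤ ∫ₓʸ k E` with
`k = 1 + |c| + K |b|`, a weight independent of `θ` and of `u`. On a piece where `∫ k ≤ 1/2` the
maximum of `E` is at most twice any of its values; cutting `J` into `N + 1` such pieces gives
`E x ≤ 2^(N+1) E x̂`, and `E x̂ = 1 - u x̂` is as small as we like once `u x̂ ≥ R_ε`. -/

theorem Gstar.nonneg {g : ℝ → ℝ} (hgs : Gstar g) {u : ℝ} (hu : u ∈ Icc (0:ℝ) 1) : 0 ≤ g u := by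
  obtain ⟨hg0, hg1, hgpos⟩ := hgs
  rcases hu.1.eq_or_lt with rfl | hu0
  · exact hg0.ge
  rcases hu.2.eq_or_lt with rfl | hu1
  · exact hg1.ge
  exact (hgpos u ⟨hu0, hu1⟩).le

theorem Gone.exists_abs_le_mul_one_sub {g : ℝ → ℝ} (hg1 : Gone g)
    (hg : ContinuousOn g (Icc 0 1)) (hgs : Gstar g) :
    ∃ K, 0 ≤ K ∧ ∀ u ∈ Icc (0:ℝ) 1, |g u| ≤ K * (1 - u) := by
  obtain ⟨K₀, hK₀⟩ := hg1
  obtain ⟨l, hl, hlK₀⟩ := (mem_nhdsLT_iff_exists_Ioo_subset' zero_lt_one).1 hK₀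
  obtain ⟨M, hM⟩ := isCompact_Icc.exists_bound_of_continuousOn hg
  have hl1 : 0 < 1 - l := sub_pos.2 hl
  have hM0 : 0 ≤ M := (norm_nonneg _).trans (hM 0 ⟨le_rfl, zero_le_one⟩)
  refine ⟨max K₀ 0 + M / (1 - l), by positivity, fun u hu => ?_⟩
  rcases le_or_gt u l with hul | hlu
  · calc |g u| ≤ M := hM u hu
      _ = M / (1 - l) * (1 - l) := (div_mul_cancel₀ M hl1.ne').symm
      _ ≤ (max K₀ 0 + M / (1 - l)) * (1 - u) := by
        gcongr
        linarith [le_max_right K₀ 0]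
  rcases hu.2.eq_or_lt with rfl | hu1
  · simp [hgs.2.1]
  have hgu : g u / (1 - u) ≤ K₀ := hlK₀ ⟨hlu, hu1⟩
  calc |g u| = g u := abs_of_nonneg (hgs.nonneg hu)
    _ ≤ K₀ * (1 - u) := (div_le_iff₀ (sub_pos.2 hu1)).1 hgu
    _ ≤ (max K₀ 0 + M / (1 - l)) * (1 - u) := by
      gcongr
      linarith [le_max_left K₀ 0, div_nonneg hM0 hl1.le]

section HalvingGronwall

variable {k E : ℝ → ℝ} {a b : ℝ}

theorem le_two_mul_of_abs_sub_le_integral (hk : IntervalIntegrable k volume a b)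
    (hk0 : ∀ t ∈ Icc a b, 0 ≤ k t) (hE : ContinuousOn E (Icc a b))
    (hE0 : ∀ t ∈ Icc a b, 0 ≤ E t)
    (hvar : ∀ x ∈ Icc a b, ∀ y ∈ Icc a b, x ≤ y → |E y - E x| ≤ ∫ t in x..y, k t * E t)
    (hint : ∫ t in a..b, k t ≤ 1 / 2) :
    ∀ x ∈ Icc a b, ∀ y ∈ Icc a b, E x ≤ 2 * E y := by
  intro x hx y hy
  obtain ⟨m, hm, hmax⟩ := isCompact_Icc.exists_isMaxOn ⟨x, hx⟩ hE
  have hk0' : 0 ≤ᵐ[volume.restrict (Ioc a b)] k :=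
    (ae_restrict_iff' measurableSet_Ioc).2
      (ae_of_all _ fun t ht => hk0 t (Ioc_subset_Icc_self ht))
  have hhalf : ∀ p ∈ Icc a b, ∀ q ∈ Icc a b, p ≤ q → ∫ t in p..q, k t * E t ≤ E m / 2 := by
    intro p hp q hq hpq
    have hsub : uIcc p q ⊆ uIcc a b := uIcc_subset_uIcc (mem_uIcc_of_le hp.1 hp.2)
      (mem_uIcc_of_le hq.1 hq.2)
    have hsub' : Icc p q ⊆ Icc a b := Icc_subset_Icc hp.1 hq.2
    calc ∫ t in p..q, k t * E t ≤ ∫ t in p..q, k t * E m := by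
          refine intervalIntegral.integral_mono_on hpq
            ((hk.mono_set hsub).mul_continuousOn (hE.mono ?_))
            ((hk.mono_set hsub).mul_const _)
            fun t ht => mul_le_mul_of_nonneg_left (hmax (hsub' ht)) (hk0 t (hsub' ht))
          rwa [uIcc_of_le hpq]
      _ = (∫ t in p..q, k t) * E m := intervalIntegral.integral_mul_const _ _
      _ ≤ (∫ t in a..b, k t) * E m := by
          gcongr
          · exact hE0 m hm
          · exact intervalIntegral.integral_mono_interval hp.1 hpq hq.2 hk0' hk
      _ ≤ E m / 2 := by nlinarith [hE0 m hm]
  have hmy : E m ≤ 2 * E y := by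
    rcases le_total y m with hym | hmy
    · linarith [le_abs_self (E m - E y), hvar y hy m hm hym, hhalf y hy m hm hym]
    · linarith [neg_abs_le (E y - E m), hvar m hm y hy hmy, hhalf m hm y hy hmy]
  exact (hmax hx).trans hmy

theorem le_mul_mul_of_Icc_split {c A B : ℝ} (hc : c ∈ Icc a b) (hA : 1 ≤ A) (hB : 1 ≤ B)
    (hE0 : ∀ t ∈ Icc a b, 0 ≤ E t)
    (hL : ∀ x ∈ Icc a c, ∀ y ∈ Icc a c, E x ≤ A * E y)
    (hR : ∀ x ∈ Icc c b, ∀ y ∈ Icc c b, E x ≤ B * E y) :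
    ∀ x ∈ Icc a b, ∀ y ∈ Icc a b, E x ≤ A * B * E y := by
  have hca : c ∈ Icc a c := ⟨hc.1, le_rfl⟩
  have hcb : c ∈ Icc c b := ⟨le_rfl, hc.2⟩
  intro x hx y hy
  have hEy := hE0 y hy
  rcases le_total x c with hxc | hcx <;> rcases le_total y c with hyc | hcy
  · nlinarith [hL x ⟨hx.1, hxc⟩ y ⟨hy.1, hyc⟩, mul_le_mul_of_nonneg_left hB (mul_nonneg
      (zero_le_one.trans hA) hEy)]
  · nlinarith [hL x ⟨hx.1, hxc⟩ c hca, hR c hcb y ⟨hcy, hy.2⟩]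
  · nlinarith [hR x ⟨hcx, hx.2⟩ c hcb, hL c hca y ⟨hy.1, hyc⟩]
  · nlinarith [hR x ⟨hcx, hx.2⟩ y ⟨hcy, hy.2⟩, mul_nonneg (mul_nonneg (sub_nonneg.2 hA)
      (zero_le_one.trans hB)) hEy]

theorem le_two_pow_mul_of_abs_sub_le_integral (n : ℕ) (hk : IntervalIntegrable k volume a b)
    (hk0 : ∀ t ∈ Icc a b, 0 ≤ k t) (hE : ContinuousOn E (Icc a b))
    (hE0 : ∀ t ∈ Icc a b, 0 ≤ E t)
    (hvar : ∀ x ∈ Icc a b, ∀ y ∈ Icc a b, x ≤ y → |E y - E x| ≤ ∫ t in x..y, k t * E t)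
    (hint : ∫ t in a..b, k t ≤ (n + 1) / 2) :
    ∀ x ∈ Icc a b, ∀ y ∈ Icc a b, E x ≤ 2 ^ (n + 1) * E y := by
  induction n generalizing a with
  | zero =>
    simpa using le_two_mul_of_abs_sub_le_integral hk hk0 hE hE0 hvar (by simpa using hint)
  | succ n ih =>
    intro x hx
    have hab : a ≤ b := hx.1.trans hx.2
    obtain ⟨c, hc, hac, hcb⟩ :
        ∃ c ∈ Icc a b, ∫ t in a..c, k t ≤ 1 / 2 ∧ ∫ t in c..b, k t ≤ (n + 1) / 2 := by
      by_cases hsmall : ∫ t in a..b, k t ≤ 1 / 2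
      · exact ⟨b, ⟨hab, le_rfl⟩, hsmall, by simp; positivity⟩
      have hprim : ContinuousOn (fun x => ∫ t in a..x, k t) (Icc a b) := by
        simpa only [uIcc_of_le hab] using
          intervalIntegral.continuousOn_primitive_interval' hk left_mem_uIcc
      obtain ⟨c, hc, hac⟩ := intermediate_value_Icc hab hprim
        (show (1 / 2 : ℝ) ∈ Icc (∫ t in a..a, k t) (∫ t in a..b, k t) by
          simp only [intervalIntegral.integral_same]; constructor <;> linarith)
      have hsplit := intervalIntegral.integral_add_adjacent_intervals
        (hk.mono_set (uIcc_subset_uIcc_left (mem_uIcc_of_le hc.1 hc.2)))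
        (hk.mono_set (uIcc_subset_uIcc_right (mem_uIcc_of_le hc.1 hc.2)))
      refine ⟨c, hc, hac.le, ?_⟩
      push_cast at hint
      linarith
    have hsubL : Icc a c ⊆ Icc a b := Icc_subset_Icc le_rfl hc.2
    have hsubR : Icc c b ⊆ Icc a b := Icc_subset_Icc hc.1 le_rfl
    have hL := le_two_mul_of_abs_sub_le_integral
      (hk.mono_set (uIcc_subset_uIcc_left (mem_uIcc_of_le hc.1 hc.2)))
      (fun t ht => hk0 t (hsubL ht)) (hE.mono hsubL) (fun t ht => hE0 t (hsubL ht))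
      (fun x hx y hy => hvar x (hsubL hx) y (hsubL hy)) hac
    have hR := ih (hk.mono_set (uIcc_subset_uIcc_right (mem_uIcc_of_le hc.1 hc.2)))
      (fun t ht => hk0 t (hsubR ht)) (hE.mono hsubR) (fun t ht => hE0 t (hsubR ht))
      (fun x hx y hy => hvar x (hsubR hx) y (hsubR hy)) hcb
    simpa only [pow_succ'] using
      le_mul_mul_of_Icc_split hc one_le_two (one_le_pow₀ one_le_two) hE0 hL hR x hx

end HalvingGronwall

namespace CaraSol

variable {c : ℝ} {h : ℝ → ℝ → ℝ} {u u' : ℝ → ℝ} {α β : ℝ}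

theorem continuousOn (hsol : CaraSol c h u u' (Icc α β)) : ContinuousOn u (Icc α β) :=
  fun x hx => (hsol.1 x hx).continuousWithinAt

theorem integral_eq_sub (hsol : CaraSol c h u u' (Icc α β)) {p q : ℝ} (hp : p ∈ Icc α β)
    (hq : q ∈ Icc α β) (hpq : p ≤ q) : ∫ t in p..q, u' t = u q - u p := by
  have hsub : Icc p q ⊆ Icc α β := Icc_subset_Icc hp.1 hq.2
  refine intervalIntegral.integral_eq_sub_of_hasDerivAt_of_le hpq (hsol.continuousOn.mono hsub)
    (fun t ht => (hsol.1 t (hsub (Ioo_subset_Icc_self ht))).hasDerivAt ?_)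
    ((hsol.2.1.mono hsub).intervalIntegrable_of_Icc hpq)
  exact Icc_mem_nhds (hp.1.trans_lt ht.1) (ht.2.trans_le hq.2)

theorem abs_sub_add_abs_sub_le {G : ℝ → ℝ} (hsol : CaraSol c h u u' (Icc α β))
    (hG : IntegrableOn G (Icc α β)) (hhG : ∀ x ∈ Icc α β, |c * u' x + h x (u x)| ≤ G x)
    {p q : ℝ} (hp : p ∈ Icc α β) (hq : q ∈ Icc α β) (hpq : p ≤ q) :
    |u q - u p| + |u' q - u' p| ≤ ∫ t in p..q, (|u' t| + G t) := by
  have hu := hsol.integral_eq_sub hp hq hpq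
  obtain ⟨-, hu'c, u'', hu'', hae⟩ := hsol
  have hsub : Icc p q ⊆ Icc α β := Icc_subset_Icc hp.1 hq.2
  have hu'i : IntervalIntegrable (fun t => |u' t|) volume p q :=
    ((hu'c.mono hsub).intervalIntegrable_of_Icc hpq).abs
  have hGi : IntegrableOn G (Ioc p q) := hG.mono_set (Ioc_subset_Icc_self.trans hsub)
  have hu''G : ∀ᵐ t ∂volume.restrict (Ioc p q), |u'' t| ≤ G t := by
    refine ae_restrict_of_ae_restrict_of_subset (Ioc_subset_Icc_self.trans hsub) ?_
    filter_upwards [hae, ae_restrict_mem measurableSet_Icc] with t ht htJ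
    rw [show u'' t = -(c * u' t + h t (u t)) by linarith, abs_neg]
    exact hhG t htJ
  -- no integrability of `u''` is needed: its absolute value is dominated by `G`
  have hu''int : ∫ t in p..q, |u'' t| ≤ ∫ t in p..q, G t := by
    simp only [intervalIntegral.integral_of_le hpq]
    exact integral_mono_of_nonneg (ae_of_all _ fun t => abs_nonneg _) hGi hu''G
  calc |u q - u p| + |u' q - u' p|
      = |∫ t in p..q, u' t| + |∫ t in p..q, u'' t| := by
        rw [hu, hu'' p hp q hq]
    _ ≤ (∫ t in p..q, |u' t|) + ∫ t in p..q, G t := by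
        gcongr
        · exact intervalIntegral.abs_integral_le_integral_abs hpq
        · exact (intervalIntegral.abs_integral_le_integral_abs hpq).trans hu''int
    _ = ∫ t in p..q, (|u' t| + G t) :=
        (intervalIntegral.integral_add hu'i
          ((intervalIntegrable_iff_integrableOn_Ioc_of_le hpq).2 hGi)).symm

theorem abs_sub_energy_le {θ K : ℝ} {b g : ℝ → ℝ}
    (hsol : CaraSol c (fun x v => θ * b x * g v) u u' (Icc α β)) (hθ : |θ| ≤ 1) (hK0 : 0 ≤ K)
    (hgK : ∀ v ∈ Icc (0:ℝ) 1, |g v| ≤ K * (1 - v)) (hb : IntegrableOn b (Icc α β))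
    (hbox : ∀ x ∈ Icc α β, u x ∈ Icc (0:ℝ) 1) {p q : ℝ} (hp : p ∈ Icc α β)
    (hq : q ∈ Icc α β) (hpq : p ≤ q) :
    |(1 - u q + |u' q|) - (1 - u p + |u' p|)| ≤
      ∫ t in p..q, (1 + |c| + K * |b t|) * (1 - u t + |u' t|) := by
  have hu'c : ContinuousOn u' (Icc α β) := hsol.2.1
  have hkb : IntegrableOn (fun t => K * |b t|) (Icc α β) := hb.norm.const_mul K
  have hG : IntegrableOn (fun t => |c| * |u' t| + K * |b t| * (1 - u t)) (Icc α β) :=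
    ((continuousOn_const.mul hu'c.abs).integrableOn_compact isCompact_Icc).add
      (hkb.mul_continuousOn (continuousOn_const.sub hsol.continuousOn) isCompact_Icc)
  have hhG : ∀ x ∈ Icc α β,
      |c * u' x + θ * b x * g (u x)| ≤ |c| * |u' x| + K * |b x| * (1 - u x) := by
    intro x hx
    calc |c * u' x + θ * b x * g (u x)| ≤ |c| * |u' x| + |θ| * (|b x| * |g (u x)|) := by
          simpa only [abs_mul, mul_assoc] using abs_add_le (c * u' x) (θ * b x * g (u x))
      _ ≤ |c| * |u' x| + 1 * (|b x| * (K * (1 - u x))) := by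
          gcongr
          exact hgK _ (hbox x hx)
      _ = |c| * |u' x| + K * |b x| * (1 - u x) := by ring
  have hsub : Icc p q ⊆ Icc α β := Icc_subset_Icc hp.1 hq.2
  have hpqII {f : ℝ → ℝ} (hf : IntegrableOn f (Icc α β)) : IntervalIntegrable f volume p q :=
    (intervalIntegrable_iff_integrableOn_Icc_of_le hpq).2 (hf.mono_set hsub)
  calc |(1 - u q + |u' q|) - (1 - u p + |u' p|)|
      ≤ |u q - u p| + |u' q - u' p| := by
        refine abs_le.2 ⟨?_, ?_⟩ <;>
          linarith [neg_abs_le (u q - u p), le_abs_self (u q - u p),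
            abs_sub_abs_le_abs_sub (u' q) (u' p), abs_sub_abs_le_abs_sub (u' p) (u' q),
            abs_sub_comm (u' p) (u' q)]
    _ ≤ ∫ t in p..q, (|u' t| + (|c| * |u' t| + K * |b t| * (1 - u t))) :=
        hsol.abs_sub_add_abs_sub_le hG hhG hp hq hpq
    _ ≤ ∫ t in p..q, (1 + |c| + K * |b t|) * (1 - u t + |u' t|) := by
        refine intervalIntegral.integral_mono_on hpq ?_ ?_ fun t ht => ?_
        · exact ((hu'c.mono hsub).intervalIntegrable_of_Icc hpq).abs.add (hpqII hG)
        · exact hpqII (((integrableOn_const measure_Icc_lt_top.ne).add hkb).mul_continuousOn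
            ((continuousOn_const.sub hsol.continuousOn).add hu'c.abs) isCompact_Icc)
        · have h1u := sub_nonneg.2 (hbox t (hsub ht)).2
          have hKb := mul_nonneg hK0 (abs_nonneg (b t))
          nlinarith [mul_nonneg hKb (abs_nonneg (u' t)), mul_nonneg (abs_nonneg c) h1u]

end CaraSol

/-- Lemma 2.6 (lem-Re): solutions with a large interior maximum stay uniformly
close to 1 with small derivative. -/
theorem statement11 (c : ℝ) (g : ℝ → ℝ)
    (hg : ContinuousOn g (Icc 0 1)) (hgs : Gstar g) (hg1 : Gone g)
    (α β : ℝ) (hαβ : α ≤ β) (b : ℝ → ℝ) (hb : IntegrableOn b (Icc α β)) :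
    ∀ ε ∈ Ioo (0:ℝ) 1, ∃ Rε ∈ Ioo (0:ℝ) 1, ∀ θ ∈ Ioc (0:ℝ) 1, ∀ u u' : ℝ → ℝ,
      CaraSol c (fun x v => θ * b x * g v) u u' (Icc α β) →
      (∀ x ∈ Icc α β, u x ∈ Icc (0:ℝ) 1) →
      ∀ xh ∈ Icc α β, Rε ≤ u xh → u' xh = 0 →
        ∀ x ∈ Icc α β, 1 - ε ≤ u x ∧ |u' x| ≤ ε := by
  obtain ⟨K, hK0, hgK⟩ := hg1.exists_abs_le_mul_one_sub hg hgs
  have hk : IntervalIntegrable (fun t => 1 + |c| + K * |b t|) volume α β :=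
    (intervalIntegrable_iff_integrableOn_Icc_of_le hαβ).2
      ((integrableOn_const measure_Icc_lt_top.ne).add (hb.norm.const_mul K))
  obtain ⟨N, hN⟩ : ∃ N : ℕ, ∫ t in α..β, (1 + |c| + K * |b t|) ≤ (N + 1) / 2 := by
    obtain ⟨N, hN⟩ := exists_nat_ge (2 * ∫ t in α..β, (1 + |c| + K * |b t|))
    exact ⟨N, by linarith⟩
  intro ε hε
  have hC : (0:ℝ) < 2 ^ (N + 1) := by positivity
  refine ⟨1 - ε / 2 ^ (N + 1), ⟨?_, sub_lt_self _ (div_pos hε.1 hC)⟩, ?_⟩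
  · exact sub_pos.2 ((div_le_self hε.1.le (one_le_pow₀ one_le_two)).trans_lt hε.2)
  intro θ hθ u u' hsol hbox xh hxh hR hu'xh x hx
  have hE := le_two_pow_mul_of_abs_sub_le_integral (E := fun t => 1 - u t + |u' t|) N hk
    (fun t _ => by positivity)
    ((continuousOn_const.sub hsol.continuousOn).add hsol.2.1.abs)
    (fun t ht => by linarith [abs_nonneg (u' t), (hbox t ht).2])
    (fun p hp q hq hpq => hsol.abs_sub_energy_le (abs_le.2 ⟨by linarith [hθ.1], hθ.2⟩) hK0 hgK
      hb hbox hp hq hpq) hN x hx xh hxh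
  have hExh : 2 ^ (N + 1) * (1 - u xh + |u' xh|) ≤ ε := by
    rw [hu'xh, abs_zero, add_zero, ← le_div_iff₀' hC]
    linarith
  constructor <;> linarith [abs_nonneg (u' x), (hbox x hx).2]
end
end
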